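/- Let G be a finite digraph, H ∈ T_a, and ξ ∈ H(G,H) a homomorphism. If 𝔠₀,…,𝔠_I is a walk in the digraph G_ξ with ι_ξ(𝔠₀) = ι_ξ(𝔠_I), then this walk is trivial, i.e., 𝔠_i = 𝔠₀ for all i. In particular, G_ξ ∈ T_a. -/

import Mathlib

/-- A homomorphism between digraphs `(V, A)` and `(W, B)`:
a map sending every arc to an arc. -/
def IsHom {V W : Type} (A : V → V → Prop) (B : W → W → Prop) (f : V → W) : Prop :=
  ∀ ⦃v w : V⦄, A v w → B (f v) (f w)

/-- A strict homomorphism: a homomorphism mapping proper arcs to proper arcs. -/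
def IsStrictHom {V W : Type} (A : V → V → Prop) (B : W → W → Prop) (f : V → W) : Prop :=
  IsHom A B f ∧ ∀ ⦃v w : V⦄, A v w → v ≠ w → f v ≠ f w

/-- Adjacency in a digraph. -/
def DAdj {V : Type} (A : V → V → Prop) (v w : V) : Prop := A v w ∨ A w v

/-- `v` and `w` are connected in `X`: `v = w` (with `v ∈ X`), or there is a line
`z 0, …, z I` inside `X` connecting them, consecutive members being adjacent. -/
def ConnIn {V : Type} (A : V → V → Prop) (X : Set V) (v w : V) : Prop :=
  ∃ (I : ℕ) (z : ℕ → V), z 0 = v ∧ z I = w ∧ (∀ i ≤ I, z i ∈ X) ∧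
    ∀ i < I, DAdj A (z i) (z (i + 1))

/-- `γ_X(v)`: the set of `w ∈ X` connected with `v` in `X`. -/
def gammaSet {V : Type} (A : V → V → Prop) (X : Set V) (v : V) : Set V :=
  {w | ConnIn A X v w}

/-- `Γ_ξ(v)`: the connectivity component of `v` in the preimage `ξ⁻¹(ξ(v))`. -/
def GammaComp {V W : Type} (A : V → V → Prop) (ξ : V → W) (v : V) : Set V :=
  gammaSet A {u | ξ u = ξ v} v

/-- The set of homomorphisms `H(G,H)` (as a type). -/
def HomSet {V W : Type} (A : V → V → Prop) (B : W → W → Prop) : Type :=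
  {f : V → W // IsHom A B f}

/-- The set of strict homomorphisms `S(G,H)` (as a type). -/
def StrictHomSet {V W : Type} (A : V → V → Prop) (B : W → W → Prop) : Type :=
  {f : V → W // IsStrictHom A B f}

/-- The vertex set of the digraph `G_ξ`: the components `Γ_ξ(v)`, `v ∈ V(G)`. -/
def GVert {V W : Type} (A : V → V → Prop) (ξ : V → W) : Type :=
  {C : Set V // ∃ v, C = GammaComp A ξ v}

/-- The arc relation of the digraph `G_ξ`. -/
def GArc {V W : Type} (A : V → V → Prop) (ξ : V → W) :
    GVert A ξ → GVert A ξ → Prop :=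
  fun C D => ∃ a ∈ C.1, ∃ b ∈ D.1, A a b

/-- The canonical map `π_ξ : G → G_ξ`, `v ↦ Γ_ξ(v)`. -/
def piMap {V W : Type} (A : V → V → Prop) (ξ : V → W) (v : V) : GVert A ξ :=
  ⟨GammaComp A ξ v, v, rfl⟩

/-- `Θ_{G,H'}(ξ)`: the homomorphisms `ζ : G → H'` with `G_ζ = G_ξ`
(equality of the digraphs `G_ζ` and `G_ξ`, i.e. of their vertex sets,
which determines the arc sets). -/
def ThetaSet {V W W' : Type} (A : V → V → Prop) (B' : W' → W' → Prop)
    (ξ : V → W) : Set (V → W') :=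
  {ζ | IsHom A B' ζ ∧
    {C : Set V | ∃ v, C = GammaComp A ζ v} = {C : Set V | ∃ v, C = GammaComp A ξ v}}

/-- `R ⊑_Γ S` with respect to a class `D'` of finite digraphs: a strong Γ-scheme
from `R` to `S` exists, i.e. for every finite digraph `G ∈ D'` an injective map
`ρ_G : H(G,R) → H(G,S)` with `Γ_{ρ_G(ξ)}(v) = Γ_ξ(v)` for all `ξ`, `v`. -/
def SqGamma (D' : (V : Type) → (V → V → Prop) → Prop)
    {VR VS : Type} (R : VR → VR → Prop) (S : VS → VS → Prop) : Prop :=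
  ∀ (V : Type) [Finite V] [Nonempty V] (A : V → V → Prop), D' V A →
    ∃ ρ : HomSet A R → HomSet A S, Function.Injective ρ ∧
      ∀ (ξ : HomSet A R) (v : V), GammaComp A (ρ ξ).1 v = GammaComp A ξ.1 v

/-- The class `T_a`: digraphs whose loop-removed digraph is acyclic,
i.e. every closed walk is trivial. -/
def Ta {V : Type} (A : V → V → Prop) : Prop :=
  ∀ (z : ℕ → V) (I : ℕ), 0 < I →
    (∀ i < I, A (z i) (z (i + 1)) ∧ z i ≠ z (i + 1)) → z 0 ≠ z I

/-- A poset: a reflexive, antisymmetric, transitive digraph. -/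
def IsPosetRel {V : Type} (A : V → V → Prop) : Prop :=
  Reflexive A ∧ AntiSymmetric A ∧ Transitive A

/-- An element of `P^*`: an irreflexive, antisymmetric, transitive digraph. -/
def IsStrictPosetRel {V : Type} (A : V → V → Prop) : Prop :=
  Irreflexive A ∧ AntiSymmetric A ∧ Transitive A

/-- The direct (disjoint) sum of two digraphs. -/
def sumRel {V W : Type} (A : V → V → Prop) (B : W → W → Prop) :
    V ⊕ W → V ⊕ W → Prop
  | Sum.inl v, Sum.inl w => A v w
  | Sum.inr v, Sum.inr w => B v w
  | _, _ => False

/-- The open neighborhood `N(v)`. -/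
def Nbr {Z : Type} (A : Z → Z → Prop) (v : Z) : Set Z :=
  {w | w ≠ v ∧ (A v w ∨ A w v)}

/-- The in-neighborhood `N^in(v)`. -/
def NIn {Z : Type} (A : Z → Z → Prop) (v : Z) : Set Z :=
  {w | w ≠ v ∧ A w v}

/-- The out-neighborhood `N^out(v)`. -/
def NOut {Z : Type} (A : Z → Z → Prop) (v : Z) : Set Z :=
  {w | w ≠ v ∧ A v w}

/-- `A_r`: the arcs of `R` minus all arcs between `M` and `X`. -/
def ArRel {Z : Type} (A : Z → Z → Prop) (X M : Set Z) : Z → Z → Prop :=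
  fun v w => A v w ∧ ¬(v ∈ M ∧ w ∈ X) ∧ ¬(v ∈ X ∧ w ∈ M)

/-- `A_d = { m β(x) : m x ∈ A(R) ∩ (M × X) }`. -/
def AdRel {Z : Type} (A : Z → Z → Prop) (X M : Set Z) (β : Z → Z) : Z → Z → Prop :=
  fun v w => v ∈ M ∧ ∃ x ∈ X, A v x ∧ w = β x

/-- `A_u = { β(x) m : x m ∈ A(R) ∩ (X × M) }`. -/
def AuRel {Z : Type} (A : Z → Z → Prop) (X M : Set Z) (β : Z → Z) : Z → Z → Prop :=
  fun v w => w ∈ M ∧ ∃ x ∈ X, A x w ∧ v = β x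

/-- The rearranged digraph `S`, with `A(S) = A_r ∪ A_d ∪ A_u`. -/
def SRel {Z : Type} (A : Z → Z → Prop) (X M : Set Z) (β : Z → Z) : Z → Z → Prop :=
  fun v w => ArRel A X M v w ∨ AdRel A X M β v w ∨ AuRel A X M β v w

/-- `U_ξ = { v : ξ(v) ∈ T and ξ[N_G(v)] ∩ M ≠ ∅ }` (for `T = X`; with `T = Y`
this gives `U'_ζ`). -/
def USet {V Z : Type} (AG : V → V → Prop) (T M : Set Z) (ξ : V → Z) : Set V :=
  {v | ξ v ∈ T ∧ ∃ w ∈ Nbr AG v, ξ w ∈ M}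

open Classical in
/-- The rearranged homomorphism `ρ_G(ξ)`: `β(ξ(v))` on `U_ξ` and `ξ(v)` elsewhere. -/
noncomputable def rhoMap {V Z : Type} (AG : V → V → Prop) (X M : Set Z) (β : Z → Z)
    (ξ : V → Z) : V → Z :=
  fun v => if v ∈ USet AG X M ξ then β (ξ v) else ξ v

/-!
Since `ι_ξ` is a homomorphism `G_ξ → H`, a walk in `G_ξ` whose ends have equal `ι_ξ`-image maps
to a closed walk in `H`, which is constant because `H*` is acyclic. So every arc `𝔠ᵢ𝔠ᵢ₊₁` of the
walk lies over a single vertex of `H`; it is realised by adjacent vertices of one fibre of `ξ`,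
which therefore lie in one component, i.e. `𝔠ᵢ = 𝔠ᵢ₊₁`.
-/

open Relation

section Walks

variable {α : Type*} {r : α → α → Prop}

theorem reflTransGen_of_walk {z : ℕ → α} {m n : ℕ} (hmn : m ≤ n)
    (hz : ∀ i ∈ Set.Ico m n, r (z i) (z (i + 1))) : ReflTransGen r (z m) (z n) :=
  (reflTransGen_of_succ_of_le (fun i j => r (z i) (z j)) hz hmn).lift z fun _ _ h => h

theorem exists_walk_of_transGen {a b : α} (h : TransGen r a b) :
    ∃ (n : ℕ) (z : ℕ → α), 0 < n ∧ z 0 = a ∧ z n = b ∧ ∀ i < n, r (z i) (z (i + 1)) := by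
  induction h using TransGen.head_induction_on with
  | @single a hab => exact ⟨1, fun | 0 => a | _ => b, one_pos, rfl, rfl, fun | 0, _ => hab⟩
  | @head a c hac _ ih =>
    obtain ⟨n, z, hn, rfl, rfl, hz⟩ := ih
    exact ⟨n + 1, fun | 0 => a | i + 1 => z i, n.succ_pos, rfl, rfl,
      fun | 0, _ => hac | i + 1, hi => hz i (by omega)⟩

theorem exists_walk_of_reflTransGen {a b : α} (h : ReflTransGen r a b) :
    ∃ (n : ℕ) (z : ℕ → α), z 0 = a ∧ z n = b ∧ ∀ i < n, r (z i) (z (i + 1)) := by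
  obtain rfl | h := reflTransGen_iff_eq_or_transGen.1 h
  · exact ⟨0, fun _ => b, rfl, rfl, fun _ h => absurd h (Nat.not_lt_zero _)⟩
  · obtain ⟨n, z, -, hz⟩ := exists_walk_of_transGen h
    exact ⟨n, z, hz⟩

theorem walk_const_of_forall_eq {z : ℕ → α} {n : ℕ} (h : ∀ i < n, z i = z (i + 1)) :
    ∀ i ≤ n, z i = z 0
  | 0, _ => rfl
  | i + 1, hi => (h i hi).symm.trans (walk_const_of_forall_eq h i (by omega))

end Walks

section Acyclic

variable {W : Type} {B : W → W → Prop}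

theorem Ta.not_transGen_self (hB : Ta B) (a : W) :
    ¬ TransGen (fun u v => B u v ∧ u ≠ v) a a := fun h => by
  obtain ⟨n, z, hn, h0, hn', hz⟩ := exists_walk_of_transGen h
  exact hB z n hn hz (h0.trans hn'.symm)

/-- Loops may occur along the walk; they are dropped by passing to `ReflGen` of the proper arcs. -/
theorem Ta.walk_const_of_closed (hB : Ta B) {z : ℕ → W} {n : ℕ}
    (hz : ∀ i < n, B (z i) (z (i + 1))) (hc : z 0 = z n) : ∀ i ≤ n, z i = z 0 := by
  intro i hi
  by_contra hne
  set P := fun u v => B u v ∧ u ≠ v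
  have hP : ∀ j < n, ReflGen P (z j) (z (j + 1)) := fun j hj => by
    by_cases h : z j = z (j + 1)
    · exact h ▸ ReflGen.refl
    · exact ReflGen.single ⟨hz j hj, h⟩
  have hto : ReflTransGen P (z 0) (z i) := by
    rw [← reflTransGen_reflGen]
    exact reflTransGen_of_walk (Nat.zero_le i) fun j hj => hP j (hj.2.trans_le hi)
  have hback : ReflTransGen P (z i) (z 0) := by
    rw [← reflTransGen_reflGen, hc]
    exact reflTransGen_of_walk hi fun j hj => hP j hj.2
  obtain h | h := reflTransGen_iff_eq_or_transGen.1 hto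
  · exact hne h
  · exact hB.not_transGen_self _ (h.trans_left hback)

end Acyclic

section Components

variable {V W : Type} {A : V → V → Prop}

theorem connIn_iff {X : Set V} {v w : V} :
    ConnIn A X v w ↔ v ∈ X ∧ w ∈ X ∧ ReflTransGen (fun a b => a ∈ X ∧ b ∈ X ∧ DAdj A a b) v w := by
  constructor
  · rintro ⟨n, z, rfl, rfl, hX, hz⟩
    refine ⟨hX 0 n.zero_le, hX n le_rfl, reflTransGen_of_walk n.zero_le fun i hi => ?_⟩
    obtain ⟨-, hi⟩ := Set.mem_Ico.1 hi
    exact ⟨hX i hi.le, hX (i + 1) hi, hz i hi⟩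
  · rintro ⟨hv, -, h⟩
    obtain ⟨n, z, h0, hn, hz⟩ := exists_walk_of_reflTransGen h
    exact ⟨n, z, h0, hn, fun | 0, _ => h0 ▸ hv | i + 1, hi => (hz i hi).2.1,
      fun i hi => (hz i hi).2.2⟩

theorem ConnIn.symm {X : Set V} {v w : V} (h : ConnIn A X v w) : ConnIn A X w v := by
  obtain ⟨hv, hw, h⟩ := connIn_iff.1 h
  refine connIn_iff.2 ⟨hw, hv, ReflTransGen.mono ?_ _ _ (ReflTransGen.swap _ _ h)⟩
  exact fun a b ⟨ha, hb, hab⟩ => ⟨hb, ha, hab.symm⟩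

theorem ConnIn.trans {X : Set V} {u v w : V} (huv : ConnIn A X u v) (hvw : ConnIn A X v w) :
    ConnIn A X u w := by
  obtain ⟨hu, -, huv⟩ := connIn_iff.1 huv
  obtain ⟨-, hw, hvw⟩ := connIn_iff.1 hvw
  exact connIn_iff.2 ⟨hu, hw, huv.trans hvw⟩

theorem eq_of_mem_gammaComp {ξ : V → W} {v w : V} (h : w ∈ GammaComp A ξ v) : ξ w = ξ v :=
  (connIn_iff.1 h).2.1

theorem mem_gammaComp_of_dAdj {ξ : V → W} {a b : V} (hab : DAdj A a b) (hξ : ξ a = ξ b) :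
    b ∈ GammaComp A ξ a :=
  connIn_iff.2 ⟨rfl, hξ.symm, ReflTransGen.single ⟨rfl, hξ.symm, hab⟩⟩

theorem gammaComp_eq_of_mem {ξ : V → W} {v w : V} (h : w ∈ GammaComp A ξ v) :
    GammaComp A ξ w = GammaComp A ξ v := by
  have hfiber : {u | ξ u = ξ w} = {u | ξ u = ξ v} := by rw [eq_of_mem_gammaComp h]
  ext u
  simp only [GammaComp, gammaSet, hfiber, Set.mem_ofPred_eq]
  exact ⟨(ConnIn.trans h ·), (ConnIn.trans h.symm ·)⟩

end Components

section Quotient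

variable {V W : Type} {A : V → V → Prop} {ξ : V → W} {ι : GVert A ξ → W}

theorem iota_eq_of_mem (hι : ∀ v : V, ι (piMap A ξ v) = ξ v) {C : GVert A ξ} {a : V}
    (ha : a ∈ C.1) : ι C = ξ a := by
  obtain ⟨v, hv⟩ := C.2
  obtain rfl : C = piMap A ξ v := Subtype.ext hv
  rw [hι, eq_of_mem_gammaComp ha]

theorem isHom_iota {B : W → W → Prop} (hξ : IsHom A B ξ) (hι : ∀ v : V, ι (piMap A ξ v) = ξ v) :
    IsHom (GArc A ξ) B ι := by
  rintro C D ⟨a, ha, b, hb, hab⟩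
  rw [iota_eq_of_mem hι ha, iota_eq_of_mem hι hb]
  exact hξ hab

theorem eq_of_gArc_of_iota_eq (hι : ∀ v : V, ι (piMap A ξ v) = ξ v) {C D : GVert A ξ}
    (hCD : GArc A ξ C D) (hι_eq : ι C = ι D) : C = D := by
  obtain ⟨a, ha, b, hb, hab⟩ := hCD
  have hb_mem : b ∈ GammaComp A ξ a := mem_gammaComp_of_dAdj (Or.inl hab)
    ((iota_eq_of_mem hι ha).symm.trans (hι_eq.trans (iota_eq_of_mem hι hb)))
  obtain ⟨v, hv⟩ := C.2
  obtain ⟨u, hu⟩ := D.2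
  have ha' : a ∈ GammaComp A ξ v := hv ▸ ha
  have hb' : b ∈ GammaComp A ξ u := hu ▸ hb
  apply Subtype.ext
  rw [hv, hu, ← gammaComp_eq_of_mem ha', ← gammaComp_eq_of_mem hb', gammaComp_eq_of_mem hb_mem]

end Quotient

theorem stmt7_general {V W : Type}
    (A : V → V → Prop) (B : W → W → Prop) (hB : Ta B)
    (ξ : V → W) (hξ : IsHom A B ξ)
    (ι : GVert A ξ → W) (hι : ∀ v : V, ι (piMap A ξ v) = ξ v) :
    (∀ (c : ℕ → GVert A ξ) (I : ℕ),
      (∀ i < I, GArc A ξ (c i) (c (i + 1))) → ι (c 0) = ι (c I) →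
        ∀ i ≤ I, c i = c 0) ∧
    Ta (GArc A ξ) := by
  have walk_trivial : ∀ (c : ℕ → GVert A ξ) (I : ℕ),
      (∀ i < I, GArc A ξ (c i) (c (i + 1))) → ι (c 0) = ι (c I) → ∀ i ≤ I, c i = c 0 := by
    intro c I hc hclosed
    have hconst : ∀ i ≤ I, ι (c i) = ι (c 0) :=
      hB.walk_const_of_closed (fun i hi => isHom_iota hξ hι (hc i hi)) hclosed
    refine walk_const_of_forall_eq fun i hi => eq_of_gArc_of_iota_eq hι (hc i hi) ?_
    rw [hconst i hi.le, hconst (i + 1) hi]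
  refine ⟨walk_trivial, fun c I hI hc hcI => (hc 0 hI).2 ?_⟩
  rw [walk_trivial c I (fun i hi => (hc i hi).1) (congrArg ι hcI) 1 hI]

/-- For `H ∈ T_a` and a homomorphism `ξ : G → H`: every walk `𝔠₀,…,𝔠_I` in `G_ξ`
with `ι_ξ(𝔠₀) = ι_ξ(𝔠_I)` is trivial; in particular `G_ξ ∈ T_a`. -/
theorem stmt7 {V W : Type} [Finite V] [Nonempty V] [Finite W] [Nonempty W]
    (A : V → V → Prop) (B : W → W → Prop) (hB : Ta B)
    (ξ : V → W) (hξ : IsHom A B ξ)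
    (ι : GVert A ξ → W) (hι : ∀ v : V, ι (piMap A ξ v) = ξ v) :
    (∀ (c : ℕ → GVert A ξ) (I : ℕ),
      (∀ i < I, GArc A ξ (c i) (c (i + 1))) → ι (c 0) = ι (c I) →
        ∀ i ≤ I, c i = c 0) ∧
    Ta (GArc A ξ) :=
  stmt7_general A B hB ξ hξ ι hι
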